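/- Let q = 2n+1 be an odd integer with n ≥ 1. Then the set of values {∑_{k=1}^{n} ‖k·t‖_q : t an integer with 1 ≤ t ≤ q−1} equals the set {(q² − g²)/8 : g a positive divisor of q with g ≠ q}. That is, the set of nonzero Lee weights of the linear code over ZMod q generated by (1, 2, …, n) is exactly {(q² − g²)/8 : g ∣ q, g < q}. -/

import Mathlib

/-- The Lee weight of `x : ZMod q`: `min(x.val, q - x.val)`. -/
def leeWt (q : ℕ) (x : ZMod q) : ℕ := min x.val (q - x.val)

private lemma leeWt_neg {q : ℕ} [NeZero q] (x : ZMod q) : leeWt q (-x) = leeWt q x := by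
  rcases eq_or_ne x 0 with h | h
  · simp [h]
  · haveI : NeZero x := ⟨h⟩
    have hv : (-x).val = q - x.val := ZMod.val_neg_of_ne_zero x
    have h1 : x.val < q := ZMod.val_lt x
    have h2 : x.val ≠ 0 := by simpa [ZMod.val_eq_zero] using h
    unfold leeWt
    rw [hv]
    omega

private lemma sum_mod_period (h : ℕ → ℕ) (g d : ℕ) :
    ∑ k ∈ Finset.range (g * d), h (k % d) = g * ∑ j ∈ Finset.range d, h j := by
  induction g with
  | zero => simp
  | succ g ih =>
    have hgd : (g + 1) * d = g * d + d := by ring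
    rw [hgd, Finset.range_eq_Ico,
      ← Finset.sum_Ico_consecutive _ (Nat.zero_le (g * d)) (Nat.le_add_right _ _),
      ← Finset.range_eq_Ico, ih, Finset.sum_Ico_eq_sum_range]
    have : ∀ i ∈ Finset.range (g * d + d - g * d), h ((g * d + i) % d) = h (i % d) := by
      intro i _
      rw [add_comm, Nat.add_mul_mod_self_right]
    rw [Finset.sum_congr rfl this]
    have h2 : g * d + d - g * d = d := by omega
    rw [h2]
    have : ∀ i ∈ Finset.range d, h (i % d) = h i := by
      intro i hi
      rw [Nat.mod_eq_of_lt (Finset.mem_range.mp hi)]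
    rw [Finset.sum_congr rfl this]
    ring

private lemma sum_perm (d u : ℕ) (hd : 0 < d) (hu : Nat.Coprime u d) (M : ℕ → ℕ) :
    ∑ j ∈ Finset.range d, M (j * u % d) = ∑ j ∈ Finset.range d, M j := by
  have hinj : ∀ a ∈ Finset.range d, ∀ b ∈ Finset.range d,
      a * u % d = b * u % d → a = b := by
    intro a ha b hb hab
    simp only [Finset.mem_range] at ha hb
    have hmod : a ≡ b [MOD d] :=
      Nat.ModEq.cancel_right_of_coprime (by simpa [Nat.Coprime, Nat.gcd_comm] using hu) hab
    have h2 : a % d = b % d := hmod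
    rwa [Nat.mod_eq_of_lt ha, Nat.mod_eq_of_lt hb] at h2
  have himg : (Finset.range d).image (fun j => j * u % d) = Finset.range d := by
    apply Finset.eq_of_subset_of_card_le
    · intro x hx
      simp only [Finset.mem_image, Finset.mem_range] at hx ⊢
      obtain ⟨j, _, rfl⟩ := hx
      exact Nat.mod_lt _ hd
    · rw [Finset.card_image_of_injOn (fun a ha b hb => hinj a ha b hb)]
  calc ∑ j ∈ Finset.range d, M (j * u % d)
      = ∑ x ∈ (Finset.range d).image (fun j => j * u % d), M x :=
        (Finset.sum_image hinj).symm
    _ = ∑ j ∈ Finset.range d, M j := by rw [himg]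

private lemma gauss_lemma (m : ℕ) : 2 * ∑ j ∈ Finset.range (m + 1), j = m * (m + 1) := by
  induction m with
  | zero => simp
  | succ m' ih =>
    rw [Finset.sum_range_succ, Nat.mul_add, ih]
    ring

private lemma sum_min_eq (m : ℕ) :
    ∑ j ∈ Finset.range (2 * m + 1), min j (2 * m + 1 - j) = m * (m + 1) := by
  have hsplit : ∑ j ∈ Finset.range (2 * m + 1), min j (2 * m + 1 - j)
      = ∑ j ∈ Finset.range (m + 1), min j (2 * m + 1 - j)
        + ∑ j ∈ Finset.Ico (m + 1) (2 * m + 1), min j (2 * m + 1 - j) := by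
    rw [Finset.range_eq_Ico, Finset.range_eq_Ico]
    exact (Finset.sum_Ico_consecutive _ (by omega) (by omega)).symm
  have hA : ∑ j ∈ Finset.range (m + 1), min j (2 * m + 1 - j)
      = ∑ j ∈ Finset.range (m + 1), j := by
    apply Finset.sum_congr rfl
    intro j hj
    simp only [Finset.mem_range] at hj
    omega
  have hB : ∑ j ∈ Finset.Ico (m + 1) (2 * m + 1), min j (2 * m + 1 - j)
      = ∑ i ∈ Finset.range m, (m - i) := by
    rw [Finset.sum_Ico_eq_sum_range]
    have h1 : 2 * m + 1 - (m + 1) = m := by omega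
    rw [h1]
    apply Finset.sum_congr rfl
    intro i hi
    simp only [Finset.mem_range] at hi
    omega
  have hB2 : ∑ i ∈ Finset.range m, (m - i) = (∑ i ∈ Finset.range m, i) + m := by
    have := Finset.sum_range_reflect (fun i => m - i) m
    rw [← this]
    have : ∀ i ∈ Finset.range m, m - (m - 1 - i) = i + 1 := by
      intro i hi
      simp only [Finset.mem_range] at hi
      omega
    rw [Finset.sum_congr rfl this, Finset.sum_add_distrib]
    simp
  have hstep : ∑ j ∈ Finset.range (m + 1), j = (∑ j ∈ Finset.range m, j) + m :=
    Finset.sum_range_succ (fun i => i) m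
  have gauss := gauss_lemma m
  omega

private lemma key_lemma (n q : ℕ) (hn : 1 ≤ n) (hq : q = 2 * n + 1) (t : ℕ)
    (ht1 : 1 ≤ t) (ht2 : t ≤ q - 1) :
    ∑ k ∈ Finset.Icc 1 n, leeWt q ((k : ZMod q) * (t : ZMod q))
      = (q ^ 2 - (Nat.gcd t q) ^ 2) / 8 := by
  haveI : NeZero q := ⟨by omega⟩
  set g := Nat.gcd t q with hg
  have hg0 : 0 < g := Nat.gcd_pos_of_pos_left q ht1
  set d := q / g with hdd
  set u := t / g with huu
  have hqgd : q = g * d := (Nat.mul_div_cancel' (Nat.gcd_dvd_right t q)).symm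
  have htgu : t = g * u := (Nat.mul_div_cancel' (Nat.gcd_dvd_left t q)).symm
  have hco : Nat.Coprime u d := Nat.coprime_div_gcd_div_gcd hg0
  have hd0 : 0 < d := by
    rcases Nat.eq_zero_or_pos d with h | h
    · exfalso; rw [h, mul_zero] at hqgd; omega
    · exact h
  -- d is odd
  obtain ⟨m, hm⟩ : ∃ m, d = 2 * m + 1 := by
    rcases Nat.even_or_odd d with ⟨c, hc⟩ | ⟨c, hc⟩
    · exfalso
      have : q = 2 * (g * c) := by rw [hqgd, hc]; ring
      omega
    · exact ⟨c, by omega⟩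
  -- value formula
  have hval : ∀ k : ℕ, leeWt q ((k : ZMod q) * (t : ZMod q))
      = g * min (k * u % d) (d - k * u % d) := by
    intro k
    have hcast : (k : ZMod q) * (t : ZMod q) = ((k * t : ℕ) : ZMod q) := by push_cast; ring
    rw [hcast]
    unfold leeWt
    rw [ZMod.val_natCast]
    have h1 : k * t % q = (k * u % d) * g := by
      conv_lhs => rw [htgu, hqgd]
      have : k * (g * u) = (k * u) * g := by ring
      rw [this, mul_comm g d, Nat.mul_mod_mul_right]
    rw [h1]
    have h2 : q - (k * u % d) * g = (d - k * u % d) * g := by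
      rw [hqgd]; rw [Nat.sub_mul]; ring_nf
    rw [h2]
    rw [mul_comm (k * u % d) g, mul_comm (d - k * u % d) g, Nat.mul_min_mul_left]
  set F : ℕ → ℕ := fun k => leeWt q ((k : ZMod q) * (t : ZMod q)) with hF
  -- symmetry : F (q - k) = F k for 1 ≤ k ≤ q
  have hsym : ∀ k : ℕ, k ≤ q → F (q - k) = F k := by
    intro k hk
    show leeWt q _ = leeWt q _
    have hc : ((q - k : ℕ) : ZMod q) = -(k : ZMod q) := by
      rw [Nat.cast_sub hk, ZMod.natCast_self, zero_sub]
    rw [hc, neg_mul, leeWt_neg]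
  -- doubling
  have hdouble : ∑ k ∈ Finset.range q, F k = 2 * ∑ k ∈ Finset.Icc 1 n, F k := by
    have h0 : F 0 = 0 := by
      show leeWt q _ = 0
      simp [leeWt]
    have e1 : ∑ k ∈ Finset.range q, F k = ∑ k ∈ Finset.Ico 1 q, F k := by
      rw [Finset.range_eq_Ico]
      rw [← Finset.sum_Ico_consecutive _ (Nat.zero_le 1) (by omega)]
      simp [h0]
    have e2 : ∑ k ∈ Finset.Ico 1 q, F k
        = ∑ k ∈ Finset.Ico 1 (n + 1), F k + ∑ k ∈ Finset.Ico (n + 1) q, F k :=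
      (Finset.sum_Ico_consecutive _ (by omega) (by omega)).symm
    have e3 : ∑ k ∈ Finset.Ico (n + 1) q, F k = ∑ k ∈ Finset.Ico 1 (n + 1), F k := by
      apply Finset.sum_nbij' (fun k => q - k) (fun k => q - k)
      · intro a ha
        simp only [Finset.mem_Ico] at ha ⊢
        omega
      · intro a ha
        simp only [Finset.mem_Ico] at ha ⊢
        omega
      · intro a ha
        simp only [Finset.mem_Ico] at ha
        omega
      · intro a ha
        simp only [Finset.mem_Ico] at ha
        omega
      · intro a ha
        simp only [Finset.mem_Ico] at ha
        exact (hsym a (by omega)).symm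
    have e4 : Finset.Ico 1 (n + 1) = Finset.Icc 1 n := Finset.Ico_add_one_right_eq_Icc 1 n
    rw [e1, e2, e3, e4]
    omega
  -- compute the full sum
  have hfull : ∑ k ∈ Finset.range q, F k = g * (g * (m * (m + 1))) := by
    have e1 : ∑ k ∈ Finset.range q, F k
        = ∑ k ∈ Finset.range (g * d), (fun r => g * min (r * u % d) (d - r * u % d)) (k % d) := by
      rw [← hqgd]
      apply Finset.sum_congr rfl
      intro k _
      rw [hF]
      simp only
      rw [hval k]
      congr 2 <;> rw [Nat.mod_mul_mod]
    rw [e1, sum_mod_period (fun r => g * min (r * u % d) (d - r * u % d)) g d]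
    have e2 : ∑ j ∈ Finset.range d, g * min (j * u % d) (d - j * u % d)
        = ∑ j ∈ Finset.range d, g * min j (d - j) :=
      sum_perm d u hd0 hco (fun r => g * min r (d - r))
    rw [e2, ← Finset.mul_sum, hm, sum_min_eq m]
  -- conclude
  have h2S : 2 * ∑ k ∈ Finset.Icc 1 n, F k = g * (g * (m * (m + 1))) := by
    rw [← hdouble, hfull]
  have hsq : q ^ 2 = g ^ 2 + 4 * (g * (g * (m * (m + 1)))) := by
    rw [hqgd, hm]; ring
  have hfin : q ^ 2 - g ^ 2 = (∑ k ∈ Finset.Icc 1 n, F k) * 8 := by omega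
  exact ((Nat.div_eq_of_eq_mul_left (by norm_num) hfin).symm)

/-- For `q = 2n+1` odd, the set of nonzero Lee weights of the code over `ZMod q`
generated by `(1, 2, …, n)` is exactly `{(q² - g²)/8 : g ∣ q, g ≠ q}`. -/
theorem stmt7 (n q : ℕ) (hn : 1 ≤ n) (hq : q = 2 * n + 1) :
    {w : ℕ | ∃ t : ℕ, 1 ≤ t ∧ t ≤ q - 1 ∧
        w = ∑ k ∈ Finset.Icc 1 n, leeWt q ((k : ZMod q) * (t : ZMod q))}
      = {w : ℕ | ∃ g : ℕ, 0 < g ∧ g ∣ q ∧ g ≠ q ∧ w = (q ^ 2 - g ^ 2) / 8} := by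
  ext w
  simp only [Set.mem_setOf_eq]
  constructor
  · rintro ⟨t, ht1, ht2, rfl⟩
    refine ⟨Nat.gcd t q, Nat.gcd_pos_of_pos_left q ht1, Nat.gcd_dvd_right t q, ?_, ?_⟩
    · have : Nat.gcd t q ≤ t := Nat.le_of_dvd ht1 (Nat.gcd_dvd_left t q)
      omega
    · exact key_lemma n q hn hq t ht1 ht2
  · rintro ⟨g, hg0, hgd, hgq, rfl⟩
    have hgle : g ≤ q := Nat.le_of_dvd (by omega) hgd
    refine ⟨g, hg0, by omega, ?_⟩
    have := key_lemma n q hn hq g hg0 (by omega)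
    rw [Nat.gcd_eq_left hgd] at this
    exact this.symm
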